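/- arXiv:2509.19986 — 4 statements merged into one kernel-verified Lean document; each statement's English description precedes it below -/
import Mathlib

section
/- Consider the 2×2 block linear system with blocks A₁₁, A₂₂ invertible, off-diagonal blocks given in low-rank form L₁S₁₂R₂ and L₂S₂₁R₁, unknowns x₁,x₂ and right-hand sides f₁,f₂. Suppose RᵢAᵢᵢ⁻¹Lᵢ is invertible for i=1,2 and set Ãᵢ := (RᵢAᵢᵢ⁻¹Lᵢ)⁻¹. If (y₁,y₂) solves the compressed system Ã₁y₁ + S₁₂y₂ = Ã₁R₁A₁₁⁻¹f₁ and S₂₁y₁ + Ã₂y₂ = Ã₂R₂A₂₂⁻¹f₂, then x₁ := A₁₁⁻¹f₁ − A₁₁⁻¹L₁Ã₁R₁A₁₁⁻¹f₁ + A₁₁⁻¹L₁Ã₁y₁ and the analogously defined x₂ solve the original blocked system A₁₁x₁ + L₁S₁₂R₂x₂ = f₁, L₂S₂₁R₁x₁ + A₂₂x₂ = f₂. -/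
open Matrix

/-- If `(y₁, y₂)` solves the compressed 2×2 block system, then the reconstructed
vectors `x₁, x₂` solve the original blocked system with low-rank off-diagonal
blocks `L₁ S₁₂ R₂` and `L₂ S₂₁ R₁`. -/
theorem stmt_1 {n m k : ℕ}
    (A₁₁ : Matrix (Fin n) (Fin n) ℂ) (A₂₂ : Matrix (Fin m) (Fin m) ℂ)
    (L₁ : Matrix (Fin n) (Fin k) ℂ) (R₁ : Matrix (Fin k) (Fin n) ℂ)
    (L₂ : Matrix (Fin m) (Fin k) ℂ) (R₂ : Matrix (Fin k) (Fin m) ℂ)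
    (S₁₂ S₂₁ : Matrix (Fin k) (Fin k) ℂ)
    (hA₁₁ : IsUnit A₁₁) (hA₂₂ : IsUnit A₂₂)
    (h₁ : IsUnit (R₁ * A₁₁⁻¹ * L₁)) (h₂ : IsUnit (R₂ * A₂₂⁻¹ * L₂))
    (Atil₁ Atil₂ : Matrix (Fin k) (Fin k) ℂ)
    (hAtil₁ : Atil₁ = (R₁ * A₁₁⁻¹ * L₁)⁻¹) (hAtil₂ : Atil₂ = (R₂ * A₂₂⁻¹ * L₂)⁻¹)
    (f₁ : Fin n → ℂ) (f₂ : Fin m → ℂ) (y₁ y₂ : Fin k → ℂ)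
    (hy₁ : Atil₁.mulVec y₁ + S₁₂.mulVec y₂
        = Atil₁.mulVec (R₁.mulVec (A₁₁⁻¹.mulVec f₁)))
    (hy₂ : S₂₁.mulVec y₁ + Atil₂.mulVec y₂
        = Atil₂.mulVec (R₂.mulVec (A₂₂⁻¹.mulVec f₂)))
    (x₁ : Fin n → ℂ) (x₂ : Fin m → ℂ)
    (hx₁ : x₁ = A₁₁⁻¹.mulVec f₁
        - A₁₁⁻¹.mulVec (L₁.mulVec (Atil₁.mulVec (R₁.mulVec (A₁₁⁻¹.mulVec f₁))))
        + A₁₁⁻¹.mulVec (L₁.mulVec (Atil₁.mulVec y₁)))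
    (hx₂ : x₂ = A₂₂⁻¹.mulVec f₂
        - A₂₂⁻¹.mulVec (L₂.mulVec (Atil₂.mulVec (R₂.mulVec (A₂₂⁻¹.mulVec f₂))))
        + A₂₂⁻¹.mulVec (L₂.mulVec (Atil₂.mulVec y₂))) :
    A₁₁.mulVec x₁ + (L₁ * S₁₂ * R₂).mulVec x₂ = f₁ ∧
    (L₂ * S₂₁ * R₁).mulVec x₁ + A₂₂.mulVec x₂ = f₂ := by

  have hd₁ : IsUnit A₁₁.det := (isUnit_iff_isUnit_det _).mp hA₁₁
  have hd₂ : IsUnit A₂₂.det := (isUnit_iff_isUnit_det _).mp hA₂₂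
  have hAinv₁ : A₁₁ * A₁₁⁻¹ = 1 := mul_nonsing_inv _ hd₁
  have hAinv₂ : A₂₂ * A₂₂⁻¹ = 1 := mul_nonsing_inv _ hd₂
  have hI₁ : R₁ * A₁₁⁻¹ * L₁ * Atil₁ = 1 := by
    rw [hAtil₁]; exact mul_nonsing_inv _ ((isUnit_iff_isUnit_det _).mp h₁)
  have hI₂ : R₂ * A₂₂⁻¹ * L₂ * Atil₂ = 1 := by
    rw [hAtil₂]; exact mul_nonsing_inv _ ((isUnit_iff_isUnit_det _).mp h₂)
  have key₁ : R₁.mulVec x₁ = y₁ := by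
    subst hx₁
    simp only [mulVec_add, mulVec_sub, mulVec_mulVec, ← Matrix.mul_assoc]
    rw [hI₁]
    simp only [Matrix.one_mul, one_mulVec]
    abel
  have key₂ : R₂.mulVec x₂ = y₂ := by
    subst hx₂
    simp only [mulVec_add, mulVec_sub, mulVec_mulVec, ← Matrix.mul_assoc]
    rw [hI₂]
    simp only [Matrix.one_mul, one_mulVec]
    abel
  have hS₁₂ : S₁₂.mulVec y₂
      = Atil₁.mulVec (R₁.mulVec (A₁₁⁻¹.mulVec f₁)) - Atil₁.mulVec y₁ := by
    rw [← hy₁]; abel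
  have hS₂₁ : S₂₁.mulVec y₁
      = Atil₂.mulVec (R₂.mulVec (A₂₂⁻¹.mulVec f₂)) - Atil₂.mulVec y₂ := by
    rw [← hy₂]; abel
  constructor
  · have : (L₁ * S₁₂ * R₂).mulVec x₂ = L₁.mulVec (S₁₂.mulVec (R₂.mulVec x₂)) := by
      simp [mulVec_mulVec, Matrix.mul_assoc]
    rw [this, key₂, hS₁₂, hx₁]
    simp only [mulVec_add, mulVec_sub, mulVec_mulVec, ← Matrix.mul_assoc, hAinv₁]
    simp only [Matrix.one_mul, one_mulVec, mulVec_mulVec, Matrix.mul_assoc]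
    abel
  · have : (L₂ * S₂₁ * R₁).mulVec x₁ = L₂.mulVec (S₂₁.mulVec (R₁.mulVec x₁)) := by
      simp [mulVec_mulVec, Matrix.mul_assoc]
    rw [this, key₁, hS₂₁, hx₂]
    simp only [mulVec_add, mulVec_sub, mulVec_mulVec, ← Matrix.mul_assoc, hAinv₂]
    simp only [Matrix.one_mul, one_mulVec, mulVec_mulVec, Matrix.mul_assoc]
    abel
end

section
/- Let B ∈ ℂᵐˣⁿ with m ≥ n, and suppose its conjugate transpose admits a column-pivoted QR factorization Bᴴ P = QR where R₂₂ = 0 (the trailing block of R vanishes, i.e., B has rank at most the pivot count k and R₁₁ ∈ ℂᵏˣᵏ is invertible). Then B = U·B_RS, where U = ( (I R₁₁⁻¹R₁₂) Pᵀ )ᴴ and B_RS := ( (Q₁₁R₁₁ ; Q₂₁R₁₁) )ᴴ; that is, the interpolative factorization B = U B_RS holds exactly, with B_RS consisting of k rows of B. -/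
open Matrix

/-- Interpolative factorization (left coefficient): if `Bᴴ P = Q R` is a
column-pivoted QR factorization of the conjugate transpose of `B` with trailing
block `R₂₂ = 0` and `R₁₁` invertible, then `B = U · B_RS` with
`U = ((I  R₁₁⁻¹R₁₂) Pᵀ)ᴴ` and `B_RS = (Q₁₁R₁₁ ; Q₂₁R₁₁)ᴴ`, where `B_RS`
consists of `k` rows of `B`. -/
theorem stmt_3 {k a b : ℕ}
    -- B is m×n with n = k + a ≤ m = k + b, so Bᴴ is (k+a)×(k+b)
    (hmn : a ≤ b)
    (B : Matrix (Fin k ⊕ Fin b) (Fin k ⊕ Fin a) ℂ)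
    (P : Matrix (Fin k ⊕ Fin b) (Fin k ⊕ Fin b) ℂ)
    (hP : ∃ e : Equiv.Perm (Fin k ⊕ Fin b), P = e.permMatrix ℂ)
    (Q : Matrix (Fin k ⊕ Fin a) (Fin k ⊕ Fin a) ℂ)
    (hQ : Q ∈ Matrix.unitaryGroup (Fin k ⊕ Fin a) ℂ)
    (R₁₁ : Matrix (Fin k) (Fin k) ℂ) (R₁₂ : Matrix (Fin k) (Fin b) ℂ)
    (hR₁₁ : IsUnit R₁₁)
    -- upper-triangular R with vanishing trailing block R₂₂ = 0
    (hQR : Bᴴ * P = Q * fromBlocks R₁₁ R₁₂ 0 0)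
    (U : Matrix (Fin k ⊕ Fin b) (Fin k) ℂ)
    (hU : U = (fromCols (1 : Matrix (Fin k) (Fin k) ℂ) (R₁₁⁻¹ * R₁₂) * Pᵀ)ᴴ)
    (B_RS : Matrix (Fin k) (Fin k ⊕ Fin a) ℂ)
    (hB_RS : B_RS = (Q * fromRows R₁₁ (0 : Matrix (Fin a) (Fin k) ℂ))ᴴ) :
    B = U * B_RS ∧
    -- `B_RS` consists of `k` rows of `B` (the rows selected by the pivots)
    ∀ i j, B_RS i j = star ((Bᴴ * P) j (Sum.inl i)) := by
  obtain ⟨e, rfl⟩ := hP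
  have hPPt : e.permMatrix ℂ * (e.permMatrix ℂ)ᵀ = 1 := by
    rw [← PEquiv.toMatrix_symm, ← PEquiv.toMatrix_trans, ← Equiv.toPEquiv_symm,
      ← Equiv.toPEquiv_trans]
    simp
  have hX : R₁₁ * (R₁₁⁻¹ * R₁₂) = R₁₂ := by
    rw [← Matrix.mul_assoc, mul_nonsing_inv _ ((isUnit_iff_isUnit_det _).mp hR₁₁), Matrix.one_mul]
  have hsplit : Q * fromBlocks R₁₁ R₁₂ 0 0
      = Q * fromRows R₁₁ (0 : Matrix (Fin a) (Fin k) ℂ)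
        * fromCols (1 : Matrix (Fin k) (Fin k) ℂ) (R₁₁⁻¹ * R₁₂) := by
    rw [Matrix.mul_assoc, fromRows_mul_fromCols]
    congr 1
    simp [hX]
  have hBH : Bᴴ = Q * fromRows R₁₁ (0 : Matrix (Fin a) (Fin k) ℂ)
      * (fromCols (1 : Matrix (Fin k) (Fin k) ℂ) (R₁₁⁻¹ * R₁₂) * (e.permMatrix ℂ)ᵀ) := by
    calc Bᴴ = Bᴴ * (e.permMatrix ℂ * (e.permMatrix ℂ)ᵀ) := by rw [hPPt, Matrix.mul_one]
    _ = (Bᴴ * e.permMatrix ℂ) * (e.permMatrix ℂ)ᵀ := by rw [Matrix.mul_assoc]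
    _ = _ := by rw [hQR, hsplit, Matrix.mul_assoc]
  constructor
  · have := congrArg Matrix.conjTranspose hBH
    rw [conjTranspose_conjTranspose, conjTranspose_mul] at this
    rw [this, hU, hB_RS]
  · intro i j
    rw [hB_RS, hQR]
    rw [conjTranspose_apply, Matrix.mul_apply]
    erw [Matrix.mul_apply]
    simp [conjTranspose_apply, Matrix.mul_apply, Fintype.sum_sum_type]
end

section
/- Suppose a square system Ax = f of size (4np)×(4np) is block-partitioned into p×p blocks of size 4n, with every off-diagonal block of exact rank at most 4k admitting a factorization Aᵢⱼ = LᵢSᵢⱼRⱼ with shared left factors Lᵢ ∈ ℂ^{4n×4k} and right factors Rⱼ ∈ ℂ^{4k×4n}. If all Aᵢᵢ and all RᵢAᵢᵢ⁻¹Lᵢ are invertible and the compressed (4kp)×(4kp) system with diagonal blocks Ãᵢ = (RᵢAᵢᵢ⁻¹Lᵢ)⁻¹ and off-diagonal blocks Sᵢⱼ is invertible, then the original system is uniquely solvable and its solution is recovered by xᵢ = Aᵢᵢ⁻¹fᵢ − Aᵢᵢ⁻¹LᵢÃᵢRᵢAᵢᵢ⁻¹fᵢ + Aᵢᵢ⁻¹LᵢÃᵢyᵢ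 where (yᵢ) solves the compressed system. (Stated for p = 2.) -/
open Matrix

/-- Single-level fast direct solver (p = 2 blocks): if the diagonal blocks
`Aᵢᵢ`, the matrices `Rᵢ Aᵢᵢ⁻¹ Lᵢ`, and the compressed matrix
`[[Ã₁, S₁₂],[S₂₁, Ã₂]]` are invertible, then the original blocked system is
uniquely solvable and its solution is recovered from any solution `(y₁,y₂)` of
the compressed system by the reconstruction formula. -/
theorem stmt_10 {n k : ℕ}
    (A₁₁ A₂₂ : Matrix (Fin (4 * n)) (Fin (4 * n)) ℂ)
    (L₁ L₂ : Matrix (Fin (4 * n)) (Fin (4 * k)) ℂ)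
    (R₁ R₂ : Matrix (Fin (4 * k)) (Fin (4 * n)) ℂ)
    (S₁₂ S₂₁ : Matrix (Fin (4 * k)) (Fin (4 * k)) ℂ)
    (hA₁₁ : IsUnit A₁₁) (hA₂₂ : IsUnit A₂₂)
    (h₁ : IsUnit (R₁ * A₁₁⁻¹ * L₁)) (h₂ : IsUnit (R₂ * A₂₂⁻¹ * L₂))
    (Atil₁ Atil₂ : Matrix (Fin (4 * k)) (Fin (4 * k)) ℂ)
    (hAtil₁ : Atil₁ = (R₁ * A₁₁⁻¹ * L₁)⁻¹) (hAtil₂ : Atil₂ = (R₂ * A₂₂⁻¹ * L₂)⁻¹)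
    (hC : IsUnit (fromBlocks Atil₁ S₁₂ S₂₁ Atil₂))
    (f₁ f₂ : Fin (4 * n) → ℂ) :
    (∃! x : (Fin (4 * n) → ℂ) × (Fin (4 * n) → ℂ),
        A₁₁.mulVec x.1 + (L₁ * S₁₂ * R₂).mulVec x.2 = f₁ ∧
        (L₂ * S₂₁ * R₁).mulVec x.1 + A₂₂.mulVec x.2 = f₂) ∧
    ∀ y₁ y₂ : Fin (4 * k) → ℂ,
      Atil₁.mulVec y₁ + S₁₂.mulVec y₂
          = Atil₁.mulVec (R₁.mulVec (A₁₁⁻¹.mulVec f₁)) →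
      S₂₁.mulVec y₁ + Atil₂.mulVec y₂
          = Atil₂.mulVec (R₂.mulVec (A₂₂⁻¹.mulVec f₂)) →
      ∀ x₁ x₂ : Fin (4 * n) → ℂ,
        x₁ = A₁₁⁻¹.mulVec f₁
            - A₁₁⁻¹.mulVec (L₁.mulVec (Atil₁.mulVec (R₁.mulVec (A₁₁⁻¹.mulVec f₁))))
            + A₁₁⁻¹.mulVec (L₁.mulVec (Atil₁.mulVec y₁)) →
        x₂ = A₂₂⁻¹.mulVec f₂
            - A₂₂⁻¹.mulVec (L₂.mulVec (Atil₂.mulVec (R₂.mulVec (A₂₂⁻¹.mulVec f₂))))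
            + A₂₂⁻¹.mulVec (L₂.mulVec (Atil₂.mulVec y₂)) →
        A₁₁.mulVec x₁ + (L₁ * S₁₂ * R₂).mulVec x₂ = f₁ ∧
        (L₂ * S₂₁ * R₁).mulVec x₁ + A₂₂.mulVec x₂ = f₂ := by
  -- basic invertibility facts
  have e₁ : ∀ v, A₁₁.mulVec (A₁₁⁻¹.mulVec v) = v := by
    intro v
    rw [mulVec_mulVec, mul_nonsing_inv _ ((isUnit_iff_isUnit_det _).mp hA₁₁), one_mulVec]
  have e₂ : ∀ v, A₂₂.mulVec (A₂₂⁻¹.mulVec v) = v := by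
    intro v
    rw [mulVec_mulVec, mul_nonsing_inv _ ((isUnit_iff_isUnit_det _).mp hA₂₂), one_mulVec]
  have e₁' : ∀ v, A₁₁⁻¹.mulVec (A₁₁.mulVec v) = v := by
    intro v
    rw [mulVec_mulVec, nonsing_inv_mul _ ((isUnit_iff_isUnit_det _).mp hA₁₁), one_mulVec]
  have e₂' : ∀ v, A₂₂⁻¹.mulVec (A₂₂.mulVec v) = v := by
    intro v
    rw [mulVec_mulVec, nonsing_inv_mul _ ((isUnit_iff_isUnit_det _).mp hA₂₂), one_mulVec]
  have t₁ : (R₁ * A₁₁⁻¹ * L₁) * Atil₁ = 1 := by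
    rw [hAtil₁]; exact mul_nonsing_inv _ ((isUnit_iff_isUnit_det _).mp h₁)
  have t₂ : (R₂ * A₂₂⁻¹ * L₂) * Atil₂ = 1 := by
    rw [hAtil₂]; exact mul_nonsing_inv _ ((isUnit_iff_isUnit_det _).mp h₂)
  have t₁' : Atil₁ * (R₁ * A₁₁⁻¹ * L₁) = 1 := by
    rw [hAtil₁]; exact nonsing_inv_mul _ ((isUnit_iff_isUnit_det _).mp h₁)
  have t₂' : Atil₂ * (R₂ * A₂₂⁻¹ * L₂) = 1 := by
    rw [hAtil₂]; exact nonsing_inv_mul _ ((isUnit_iff_isUnit_det _).mp h₂)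
  -- cancellation through the chains R A⁻¹ L Ã
  have c₁ : ∀ v, R₁.mulVec (A₁₁⁻¹.mulVec (L₁.mulVec (Atil₁.mulVec v))) = v := by
    intro v
    rw [mulVec_mulVec, mulVec_mulVec, mulVec_mulVec,
      t₁, one_mulVec]
  have c₂ : ∀ v, R₂.mulVec (A₂₂⁻¹.mulVec (L₂.mulVec (Atil₂.mulVec v))) = v := by
    intro v
    rw [mulVec_mulVec, mulVec_mulVec, mulVec_mulVec,
      t₂, one_mulVec]
  set g₁ := R₁.mulVec (A₁₁⁻¹.mulVec f₁) with hg₁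
  set g₂ := R₂.mulVec (A₂₂⁻¹.mulVec f₂) with hg₂
  -- the reconstruction part
  have key : ∀ y₁ y₂ : Fin (4 * k) → ℂ,
      Atil₁.mulVec y₁ + S₁₂.mulVec y₂ = Atil₁.mulVec g₁ →
      S₂₁.mulVec y₁ + Atil₂.mulVec y₂ = Atil₂.mulVec g₂ →
      ∀ x₁ x₂ : Fin (4 * n) → ℂ,
        x₁ = A₁₁⁻¹.mulVec f₁ - A₁₁⁻¹.mulVec (L₁.mulVec (Atil₁.mulVec g₁))
            + A₁₁⁻¹.mulVec (L₁.mulVec (Atil₁.mulVec y₁)) →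
        x₂ = A₂₂⁻¹.mulVec f₂ - A₂₂⁻¹.mulVec (L₂.mulVec (Atil₂.mulVec g₂))
            + A₂₂⁻¹.mulVec (L₂.mulVec (Atil₂.mulVec y₂)) →
        A₁₁.mulVec x₁ + (L₁ * S₁₂ * R₂).mulVec x₂ = f₁ ∧
        (L₂ * S₂₁ * R₁).mulVec x₁ + A₂₂.mulVec x₂ = f₂ := by
    intro y₁ y₂ hy₁ hy₂ x₁ x₂ hx₁ hx₂
    have hR₁x : R₁.mulVec x₁ = y₁ := by
      rw [hx₁, mulVec_add, mulVec_sub, c₁, c₁, ← hg₁]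
      abel
    have hR₂x : R₂.mulVec x₂ = y₂ := by
      rw [hx₂, mulVec_add, mulVec_sub, c₂, c₂, ← hg₂]
      abel
    have hAx₁ : A₁₁.mulVec x₁
        = f₁ - L₁.mulVec (Atil₁.mulVec g₁) + L₁.mulVec (Atil₁.mulVec y₁) := by
      rw [hx₁, mulVec_add, mulVec_sub, e₁, e₁, e₁]
    have hAx₂ : A₂₂.mulVec x₂
        = f₂ - L₂.mulVec (Atil₂.mulVec g₂) + L₂.mulVec (Atil₂.mulVec y₂) := by
      rw [hx₂, mulVec_add, mulVec_sub, e₂, e₂, e₂]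
    constructor
    · have : (L₁ * S₁₂ * R₂).mulVec x₂ = L₁.mulVec (S₁₂.mulVec y₂) := by
        rw [← hR₂x, mulVec_mulVec, mulVec_mulVec, Matrix.mul_assoc]
      have h := congrArg (fun w => L₁.mulVec w) hy₁
      simp only [mulVec_add] at h
      rw [hAx₁, this]
      linear_combination h
    · have : (L₂ * S₂₁ * R₁).mulVec x₁ = L₂.mulVec (S₂₁.mulVec y₁) := by
        rw [← hR₁x, mulVec_mulVec, mulVec_mulVec, Matrix.mul_assoc]
      have h := congrArg (fun w => L₂.mulVec w) hy₂
      simp only [mulVec_add] at h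
      rw [this, hAx₂]
      linear_combination h
  -- inverse facts for the compressed matrix
  set C := fromBlocks Atil₁ S₁₂ S₂₁ Atil₂ with hCdef
  have cC : ∀ v, C.mulVec (C⁻¹.mulVec v) = v := fun v => by
    rw [mulVec_mulVec, mul_nonsing_inv _ ((isUnit_iff_isUnit_det _).mp hC), one_mulVec]
  have cC' : ∀ v, C⁻¹.mulVec (C.mulVec v) = v := fun v => by
    rw [mulVec_mulVec, nonsing_inv_mul _ ((isUnit_iff_isUnit_det _).mp hC), one_mulVec]
  -- cancellation Ã₁ R₁ A₁₁⁻¹ L₁ = 1 (other order)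
  have c₁' : ∀ v, Atil₁.mulVec (R₁.mulVec (A₁₁⁻¹.mulVec (L₁.mulVec v))) = v := by
    intro v
    rw [mulVec_mulVec, mulVec_mulVec, mulVec_mulVec,
      show Atil₁ * R₁ * A₁₁⁻¹ * L₁ = 1 by
        rw [Matrix.mul_assoc, Matrix.mul_assoc, ← Matrix.mul_assoc R₁]; exact t₁',
      one_mulVec]
  have c₂' : ∀ v, Atil₂.mulVec (R₂.mulVec (A₂₂⁻¹.mulVec (L₂.mulVec v))) = v := by
    intro v
    rw [mulVec_mulVec, mulVec_mulVec, mulVec_mulVec,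
      show Atil₂ * R₂ * A₂₂⁻¹ * L₂ = 1 by
        rw [Matrix.mul_assoc, Matrix.mul_assoc, ← Matrix.mul_assoc R₂]; exact t₂',
      one_mulVec]
  -- uniqueness: the original system is injective
  have uniq : ∀ u w : (Fin (4 * n) → ℂ) × (Fin (4 * n) → ℂ),
      (A₁₁.mulVec u.1 + (L₁ * S₁₂ * R₂).mulVec u.2 = f₁ ∧
        (L₂ * S₂₁ * R₁).mulVec u.1 + A₂₂.mulVec u.2 = f₂) →
      (A₁₁.mulVec w.1 + (L₁ * S₁₂ * R₂).mulVec w.2 = f₁ ∧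
        (L₂ * S₂₁ * R₁).mulVec w.1 + A₂₂.mulVec w.2 = f₂) →
      u = w := by
    intro u w hu hw
    set d₁ := u.1 - w.1 with hd₁def
    set d₂ := u.2 - w.2 with hd₂def
    have hd1 : A₁₁.mulVec d₁ + (L₁ * S₁₂ * R₂).mulVec d₂ = 0 := by
      rw [hd₁def, hd₂def, mulVec_sub, mulVec_sub]
      linear_combination hu.1 - hw.1
    have hd2 : (L₂ * S₂₁ * R₁).mulVec d₁ + A₂₂.mulVec d₂ = 0 := by
      rw [hd₁def, hd₂def, mulVec_sub, mulVec_sub]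
      linear_combination hu.2 - hw.2
    have hAd₁ : A₁₁.mulVec d₁ = -(L₁.mulVec (S₁₂.mulVec (R₂.mulVec d₂))) := by
      rw [eq_neg_of_add_eq_zero_left hd1, mulVec_mulVec, mulVec_mulVec, Matrix.mul_assoc]
    have hAd₂ : A₂₂.mulVec d₂ = -(L₂.mulVec (S₂₁.mulVec (R₁.mulVec d₁))) := by
      rw [eq_neg_of_add_eq_zero_right hd2, mulVec_mulVec, mulVec_mulVec, Matrix.mul_assoc]
    have hsum1 : Atil₁.mulVec (R₁.mulVec d₁) + S₁₂.mulVec (R₂.mulVec d₂) = 0 := by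
      have : Atil₁.mulVec (R₁.mulVec d₁) = -(S₁₂.mulVec (R₂.mulVec d₂)) := by
        calc Atil₁.mulVec (R₁.mulVec d₁)
            = Atil₁.mulVec (R₁.mulVec (A₁₁⁻¹.mulVec (A₁₁.mulVec d₁))) := by rw [e₁']
          _ = -(Atil₁.mulVec (R₁.mulVec (A₁₁⁻¹.mulVec
                (L₁.mulVec (S₁₂.mulVec (R₂.mulVec d₂)))))) := by
              rw [hAd₁, mulVec_neg, mulVec_neg, mulVec_neg]
          _ = -(S₁₂.mulVec (R₂.mulVec d₂)) := by rw [c₁']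
      rw [this]; abel
    have hsum2 : S₂₁.mulVec (R₁.mulVec d₁) + Atil₂.mulVec (R₂.mulVec d₂) = 0 := by
      have : Atil₂.mulVec (R₂.mulVec d₂) = -(S₂₁.mulVec (R₁.mulVec d₁)) := by
        calc Atil₂.mulVec (R₂.mulVec d₂)
            = Atil₂.mulVec (R₂.mulVec (A₂₂⁻¹.mulVec (A₂₂.mulVec d₂))) := by rw [e₂']
          _ = -(Atil₂.mulVec (R₂.mulVec (A₂₂⁻¹.mulVec
                (L₂.mulVec (S₂₁.mulVec (R₁.mulVec d₁)))))) := by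
              rw [hAd₂, mulVec_neg, mulVec_neg, mulVec_neg]
          _ = -(S₂₁.mulVec (R₁.mulVec d₁)) := by rw [c₂']
      rw [this]; abel
    have hcw : C.mulVec (Sum.elim (R₁.mulVec d₁) (R₂.mulVec d₂)) = 0 := by
      rw [hCdef, fromBlocks_mulVec]
      funext i
      cases i with
      | inl i => simpa using congrFun hsum1 i
      | inr i => simpa using congrFun hsum2 i
    have hw0 : Sum.elim (R₁.mulVec d₁) (R₂.mulVec d₂) = 0 := by
      have := cC' (Sum.elim (R₁.mulVec d₁) (R₂.mulVec d₂))
      rw [hcw, mulVec_zero] at this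
      exact this.symm
    have hu₂0 : R₂.mulVec d₂ = 0 := funext fun i => congrFun hw0 (Sum.inr i)
    have hu₁0 : R₁.mulVec d₁ = 0 := funext fun i => congrFun hw0 (Sum.inl i)
    have hd₁0 : d₁ = 0 := by
      have : A₁₁.mulVec d₁ = 0 := by rw [hAd₁, hu₂0, mulVec_zero, mulVec_zero, neg_zero]
      have h := e₁' d₁
      rw [this, mulVec_zero] at h
      exact h.symm
    have hd₂0 : d₂ = 0 := by
      have : A₂₂.mulVec d₂ = 0 := by rw [hAd₂, hu₁0, mulVec_zero, mulVec_zero, neg_zero]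
      have h := e₂' d₂
      rw [this, mulVec_zero] at h
      exact h.symm
    exact Prod.ext (sub_eq_zero.mp hd₁0) (sub_eq_zero.mp hd₂0)
  -- existence: solve the compressed system and reconstruct
  set b : (Fin (4 * k) ⊕ Fin (4 * k)) → ℂ := Sum.elim (Atil₁.mulVec g₁) (Atil₂.mulVec g₂)
    with hb
  set y : (Fin (4 * k) ⊕ Fin (4 * k)) → ℂ := C⁻¹.mulVec b with hydef
  have hCy : C.mulVec y = b := cC b
  rw [hCdef, fromBlocks_mulVec] at hCy
  have hy1 : Atil₁.mulVec (y ∘ Sum.inl) + S₁₂.mulVec (y ∘ Sum.inr) = Atil₁.mulVec g₁ :=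
    funext fun i => congrFun hCy (Sum.inl i)
  have hy2 : S₂₁.mulVec (y ∘ Sum.inl) + Atil₂.mulVec (y ∘ Sum.inr) = Atil₂.mulVec g₂ :=
    funext fun i => congrFun hCy (Sum.inr i)
  set x₁ : Fin (4 * n) → ℂ := A₁₁⁻¹.mulVec f₁
      - A₁₁⁻¹.mulVec (L₁.mulVec (Atil₁.mulVec g₁))
      + A₁₁⁻¹.mulVec (L₁.mulVec (Atil₁.mulVec (y ∘ Sum.inl))) with hx₁def
  set x₂ : Fin (4 * n) → ℂ := A₂₂⁻¹.mulVec f₂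
      - A₂₂⁻¹.mulVec (L₂.mulVec (Atil₂.mulVec g₂))
      + A₂₂⁻¹.mulVec (L₂.mulVec (Atil₂.mulVec (y ∘ Sum.inr))) with hx₂def
  have hx := key (y ∘ Sum.inl) (y ∘ Sum.inr) hy1 hy2 x₁ x₂ hx₁def hx₂def
  exact ⟨⟨(x₁, x₂), hx, fun z hz => uniq z (x₁, x₂) hz hx⟩,
    fun y₁ y₂ hy₁ hy₂ x₁ x₂ hx₁ hx₂ => key y₁ y₂ hy₁ hy₂ x₁ x₂ hx₁ hx₂⟩
end

section
/- Let M be a 2×2 block matrix [[A, LSR'],[L'S'R, A']] with A, A' invertible square blocks, and with L, R, L', R' of compatible dimensions making all products defined, L, L' of full column rank and R, R' of full row rank. Assume RA⁻¹L and R'A'⁻¹L' are invertible, and let Ã = (RA⁻¹L)⁻¹ and Ã' = (R'A'⁻¹L')⁻¹. If the compressed matrix [[Ã, S],[S', Ã']] is invertible, then M is invertible. -/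
open Matrix

/-- If the compressed matrix `[[Ã, S],[S', Ã']]` is invertible (with
`Ã = (R A⁻¹ L)⁻¹`, `Ã' = (R' A'⁻¹ L')⁻¹`), then the 2×2 block matrix
`M = [[A, L S R'],[L' S' R, A']]` is invertible, under the stated
invertibility and full-rank assumptions. -/
theorem stmt_11 {n m k : ℕ}
    (A : Matrix (Fin n) (Fin n) ℂ) (A' : Matrix (Fin m) (Fin m) ℂ)
    (L : Matrix (Fin n) (Fin k) ℂ) (R : Matrix (Fin k) (Fin n) ℂ)
    (L' : Matrix (Fin m) (Fin k) ℂ) (R' : Matrix (Fin k) (Fin m) ℂ)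
    (S S' : Matrix (Fin k) (Fin k) ℂ)
    (hA : IsUnit A) (hA' : IsUnit A')
    (hRAL : IsUnit (R * A⁻¹ * L)) (hRAL' : IsUnit (R' * A'⁻¹ * L'))
    (Atil Atil' : Matrix (Fin k) (Fin k) ℂ)
    (hAtil : Atil = (R * A⁻¹ * L)⁻¹) (hAtil' : Atil' = (R' * A'⁻¹ * L')⁻¹)
    -- L, L' have full column rank; R, R' have full row rank
    (hL : Function.Injective L.mulVec) (hL' : Function.Injective L'.mulVec)
    (hR : Function.Surjective R.mulVec) (hR' : Function.Surjective R'.mulVec)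
    (hC : IsUnit (fromBlocks Atil S S' Atil')) :
    IsUnit (fromBlocks A (L * S * R') (L' * S' * R) A') := by
  subst hAtil hAtil'
  have hdRAL : IsUnit (R * A⁻¹ * L).det := (isUnit_iff_isUnit_det _).mp hRAL
  have hdRAL' : IsUnit (R' * A'⁻¹ * L').det := (isUnit_iff_isUnit_det _).mp hRAL'
  haveI := hA.invertible
  haveI := hA'.invertible
  haveI : Invertible (R * A⁻¹ * L)⁻¹ :=
    ((isUnit_nonsing_inv_iff).mpr hRAL).invertible
  rw [isUnit_iff_isUnit_det, det_fromBlocks₁₁] at hC ⊢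
  rw [invOf_eq_nonsing_inv, nonsing_inv_nonsing_inv _ hdRAL] at hC
  -- the Schur complement of the compressed matrix
  set X : Matrix (Fin k) (Fin k) ℂ := S' * (R * A⁻¹ * L) * S with hX
  have hC2 : IsUnit ((R' * A'⁻¹ * L')⁻¹ - X).det := (IsUnit.mul_iff.mp hC).2
  have key : (1 - (R' * A'⁻¹ * L') * X).det =
      (R' * A'⁻¹ * L').det * ((R' * A'⁻¹ * L')⁻¹ - X).det := by
    rw [← det_mul, Matrix.mul_sub, mul_nonsing_inv _ hdRAL']
  have h1 : IsUnit (1 - (R' * A'⁻¹ * L') * X).det := by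
    rw [key]; exact hdRAL'.mul hC2
  have hschur : A' - L' * S' * R * ⅟A * (L * S * R') =
      A' * (1 - A'⁻¹ * (L' * (X * R'))) := by
    rw [invOf_eq_nonsing_inv, Matrix.mul_sub, Matrix.mul_one,
      show A' * (A'⁻¹ * (L' * (X * R'))) = (A' * A'⁻¹) * (L' * (X * R')) from
        (Matrix.mul_assoc _ _ _).symm,
      mul_nonsing_inv _ ((isUnit_iff_isUnit_det _).mp hA'), Matrix.one_mul, hX]
    simp only [Matrix.mul_assoc]
  rw [hschur, det_mul]
  refine ((isUnit_iff_isUnit_det _).mp hA).mul (((isUnit_iff_isUnit_det _).mp hA').mul ?_)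
  rw [show A'⁻¹ * (L' * (X * R')) = (A'⁻¹ * L' * X) * R' by simp only [Matrix.mul_assoc],
    det_one_sub_mul_comm]
  rwa [show R' * (A'⁻¹ * L' * X) = R' * A'⁻¹ * L' * X from by simp only [Matrix.mul_assoc]]
end
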